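/- For all integers q ≥ 2 and n ≥ 1, the family 𝓖_q ∪ 𝓛_q is n-cell implementable under scenario (◦∗) if and only if q ≤ n + 1. -/

import Mathlib

/-- The alphabet 𝔹• = {0, 1, ∗, •}. -/
inductive BB : Type
  | zero
  | one
  | star
  | reject
deriving DecidableEq

instance : Fintype BB :=
  ⟨{BB.zero, BB.one, BB.star, BB.reject}, fun x => by cases x <;> decide⟩

/-- The cell function T : 𝔹• × 𝔹• → 𝔹: T(u,ϑ) = 1 iff u = ∗, or ϑ = ∗,
or u,ϑ ∈ 𝔹 with u = ϑ. -/
def Tcell : BB → BB → Bool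
  | BB.star, _ => true
  | _, BB.star => true
  | BB.zero, BB.zero => true
  | BB.one, BB.one => true
  | _, _ => false

/-- The word-level function T(u,ϑ) = ⋀_{j<n} T(u_j, ϑ_j). -/
def Tword {n : ℕ} (u θ : Fin n → BB) : Bool :=
  decide (∀ j, Tcell (u j) (θ j) = true)

/-- The alphabet 𝔹 = {0,1} ⊆ 𝔹•. -/
def Bcirc : Set BB := {BB.zero, BB.one}

/-- The alphabet 𝔹∗ = {0,1,∗} ⊆ 𝔹•. -/
def Bstar : Set BB := {BB.zero, BB.one, BB.star}

/-- The full alphabet 𝔹•. -/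
def Bdot : Set BB := Set.univ

/-- A family Φ of functions {0,…,q−1} → 𝔹 is n-cell implementable under
scenario (A,B) if there are mappings u : {0,…,q−1} → A^n and ϑ : Φ → B^n
with f(x) = T(u(x), ϑ(f)) for all f ∈ Φ and x. -/
def Implementable (A B : Set BB) (n q : ℕ) (Φ : Set (Fin q → Bool)) : Prop :=
  ∃ u : Fin q → Fin n → BB, ∃ θ : (Fin q → Bool) → Fin n → BB,
    (∀ x j, u x j ∈ A) ∧ (∀ f ∈ Φ, ∀ j, θ f j ∈ B) ∧
    (∀ f ∈ Φ, ∀ x, f x = Tword (u x) (θ f))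

/-- The family 𝓔_q = { x ↦ [x = t] : t ∈ [q⟩ }. -/
def Eset (q : ℕ) : Set (Fin q → Bool) :=
  { f | ∃ t : Fin q, f = fun x => decide (x = t) }

/-- The family 𝓝_q = { x ↦ [x ≠ t] : t ∈ [q⟩ }. -/
def Nset (q : ℕ) : Set (Fin q → Bool) :=
  { f | ∃ t : Fin q, f = fun x => decide (x ≠ t) }

/-- The family 𝓖_q = { x ↦ [x ≥ t] : t ∈ [q⟩ }. -/
def Gset (q : ℕ) : Set (Fin q → Bool) :=
  { f | ∃ t : Fin q, f = fun x => decide (t ≤ x) }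

/-- The family 𝓛_q = { x ↦ [x ≤ t] : t ∈ [q⟩ }. -/
def Lset (q : ℕ) : Set (Fin q → Bool) :=
  { f | ∃ t : Fin q, f = fun x => decide (x ≤ t) }

/-! When `q ≤ n + 1`, the thermometer code `u x = 1^x 0^(n-x)` implements every threshold test
with a single non-`∗` cell: `[x ≥ t]` checks cell `t - 1` against `1`, and `[x ≤ t]` checks
cell `t` against `0`.

Conversely, for `1 ≤ t < q`, rejecting `x = t - 1` in `[x ≥ t]` needs a cell on which every
accepted `x ≥ t` differs from `t - 1`; over the binary alphabet, all `x ≥ t` then agree on that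
cell. So for `t < t'` the cells chosen for `t` and `t'` differ: the cell chosen for `t` does not
separate `t' - 1` from `t'`. This gives `q - 1` distinct cells, so `q - 1 ≤ n`. -/

theorem Tword_eq_true_iff {n : ℕ} (u θ : Fin n → BB) :
    Tword u θ = true ↔ ∀ j, Tcell (u j) (θ j) = true := by
  simp [Tword]

theorem Tcell_eq_true_iff_of_mem_Bcirc {a b : BB} (ha : a ∈ Bcirc) :
    Tcell a b = true ↔ b = BB.star ∨ b = a := by
  simp only [Bcirc, Set.mem_insert_iff, Set.mem_singleton_iff] at ha
  rcases ha with rfl | rfl <;> cases b <;> simp [Tcell]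

theorem eq_of_ne_of_ne_of_mem_Bcirc {a b c : BB} (ha : a ∈ Bcirc) (hb : b ∈ Bcirc)
    (hc : c ∈ Bcirc) (hac : a ≠ c) (hbc : b ≠ c) : a = b := by
  simp only [Bcirc, Set.mem_insert_iff, Set.mem_singleton_iff] at ha hb hc
  rcases ha with rfl | rfl <;> rcases hb with rfl | rfl <;> rcases hc with rfl | rfl <;>
    simp_all

theorem exists_cell_ne_of_Tword_eq_false {n : ℕ} {v θ : Fin n → BB} (hv : ∀ j, v j ∈ Bcirc)
    (h : Tword v θ = false) :
    ∃ j, ∀ w : Fin n → BB, (∀ j, w j ∈ Bcirc) → Tword w θ = true → w j ≠ v j := by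
  obtain ⟨j, hj⟩ : ∃ j, Tcell (v j) (θ j) = false := by
    simpa [Tword] using h
  refine ⟨j, fun w hw hacc hwv => ?_⟩
  have hwj := (Tcell_eq_true_iff_of_mem_Bcirc (hw j)).1 ((Tword_eq_true_iff _ _).1 hacc j)
  rw [← Bool.not_eq_true, Tcell_eq_true_iff_of_mem_Bcirc (hv j), ← hwv] at hj
  exact hj hwj

section Implementability

variable {A B : Set BB} {n q : ℕ}

theorem Implementable.mono {Φ Ψ : Set (Fin q → Bool)} (h : Implementable A B n q Φ)
    (hΨ : Ψ ⊆ Φ) : Implementable A B n q Ψ := by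
  obtain ⟨u, θ, hu, hθ, hT⟩ := h
  exact ⟨u, θ, hu, fun f hf => hθ f (hΨ hf), fun f hf => hT f (hΨ hf)⟩

theorem Implementable.of_subset_range {ι : Type*} {g : ι → Fin q → Bool}
    {Φ : Set (Fin q → Bool)} (hΦ : Φ ⊆ Set.range g) (u : Fin q → Fin n → BB)
    (θ : ι → Fin n → BB) (hu : ∀ x j, u x j ∈ A) (hθ : ∀ i j, θ i j ∈ B)
    (hT : ∀ i x, g i x = Tword (u x) (θ i)) : Implementable A B n q Φ := by
  classical
  refine ⟨u, fun f => if h : ∃ i, g i = f then θ h.choose else fun _ => BB.star, hu, ?_, ?_⟩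
  · intro f hf j
    have hf' : ∃ i, g i = f := hΦ hf
    beta_reduce
    rw [dif_pos hf']
    exact hθ _ j
  · intro f hf x
    have hf' : ∃ i, g i = f := hΦ hf
    beta_reduce
    rw [dif_pos hf', ← hT, hf'.choose_spec]

end Implementability

theorem le_succ_of_implementable_Gset {B : Set BB} {n q : ℕ}
    (h : Implementable Bcirc B n q (Gset q)) : q ≤ n + 1 := by
  obtain ⟨u, θ, hu, -, hT⟩ := h
  obtain _ | m := q
  · omega
  have hacc (t x : Fin (m + 1)) : Tword (u x) (θ fun y => decide (t ≤ y)) = decide (t ≤ x) :=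
    (hT _ ⟨t, rfl⟩ x).symm
  have hcell (i : Fin m) : ∃ j, ∀ x, i.succ ≤ x → u x j ≠ u i.castSucc j := by
    obtain ⟨j, hj⟩ := exists_cell_ne_of_Tword_eq_false (hu i.castSucc)
      (θ := θ fun y => decide (i.succ ≤ y)) (by simp [hacc])
    exact ⟨j, fun x hx => hj (u x) (hu x) (by simp [hacc, hx])⟩
  choose J hJ using hcell
  have hJ_inj : Function.Injective J := by
    refine Function.Injective.of_lt_imp_ne fun s t hst hJst => ?_
    have hsucc_le : s.succ ≤ t.castSucc := Fin.succ_le_castSucc_iff.2 hst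
    have hconst : u t.castSucc (J s) = u t.succ (J s) :=
      eq_of_ne_of_ne_of_mem_Bcirc (hu _ _) (hu _ _) (hu s.castSucc _) (hJ s _ hsucc_le)
        (hJ s _ (hsucc_le.trans Fin.castSucc_lt_succ.le))
    exact hJ t t.succ le_rfl (hJst ▸ hconst.symm)
  simpa using Fintype.card_le_of_injective J hJ_inj

def thermometer (n x : ℕ) : Fin n → BB :=
  fun j => if (j : ℕ) < x then BB.one else BB.zero

def geWord (n t : ℕ) : Fin n → BB :=
  fun j => if (j : ℕ) + 1 = t then BB.one else BB.star

def leWord (n t : ℕ) : Fin n → BB :=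
  fun j => if (j : ℕ) = t then BB.zero else BB.star

theorem thermometer_mem_Bcirc (n x : ℕ) (j : Fin n) : thermometer n x j ∈ Bcirc := by
  unfold thermometer; split_ifs <;> simp [Bcirc]

theorem geWord_mem_Bstar (n t : ℕ) (j : Fin n) : geWord n t j ∈ Bstar := by
  unfold geWord; split_ifs <;> simp [Bstar]

theorem leWord_mem_Bstar (n t : ℕ) (j : Fin n) : leWord n t j ∈ Bstar := by
  unfold leWord; split_ifs <;> simp [Bstar]

theorem Tword_thermometer_geWord {n t : ℕ} (x : ℕ) (ht : t ≤ n) :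
    Tword (thermometer n x) (geWord n t) = decide (t ≤ x) := by
  have hcell (j : Fin n) :
      Tcell (thermometer n x j) (geWord n t j) = true ↔ ((j : ℕ) + 1 = t → (j : ℕ) < x) := by
    unfold thermometer geWord; split_ifs <;> simp_all [Tcell]
  rw [Bool.eq_iff_iff, Tword_eq_true_iff, decide_eq_true_iff]
  simp only [hcell]
  constructor
  · intro h
    obtain _ | t := t
    · omega
    · exact h ⟨t, by omega⟩ rfl
  · intro h j hj
    omega

theorem Tword_thermometer_leWord {n x : ℕ} (t : ℕ) (hx : x ≤ n) :
    Tword (thermometer n x) (leWord n t) = decide (x ≤ t) := by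
  have hcell (j : Fin n) :
      Tcell (thermometer n x j) (leWord n t j) = true ↔ ((j : ℕ) = t → x ≤ (j : ℕ)) := by
    unfold thermometer leWord; split_ifs <;> simp_all [Tcell]
  rw [Bool.eq_iff_iff, Tword_eq_true_iff, decide_eq_true_iff]
  simp only [hcell]
  constructor
  · intro h
    by_cases ht : t < n
    · exact h ⟨t, ht⟩ rfl
    · omega
  · intro h j hj
    omega

theorem implementable_GLset_of_le {n q : ℕ} (h : q ≤ n + 1) :
    Implementable Bcirc Bstar n q (Gset q ∪ Lset q) := by
  refine Implementable.of_subset_range (g := Sum.elim (fun t x => decide (t ≤ x))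
      fun t x => decide (x ≤ t)) ?_ (fun x => thermometer n x)
    (Sum.elim (fun t => geWord n t) fun t => leWord n t)
    (fun x => thermometer_mem_Bcirc n x) ?_ ?_
  · rintro f (⟨t, rfl⟩ | ⟨t, rfl⟩)
    exacts [⟨Sum.inl t, rfl⟩, ⟨Sum.inr t, rfl⟩]
  · rintro (t | t)
    exacts [geWord_mem_Bstar n t, leWord_mem_Bstar n t]
  · rintro (t | t) x
    · simp only [Sum.elim_inl, Fin.le_def,
        Tword_thermometer_geWord _ (show (t : ℕ) ≤ n by omega)]
    · simp only [Sum.elim_inr, Fin.le_def,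
        Tword_thermometer_leWord _ (show (x : ℕ) ≤ n by omega)]

theorem GLset_implementable_circStar_general (q n : ℕ) :
    Implementable Bcirc Bstar n q (Gset q ∪ Lset q) ↔ q ≤ n + 1 :=
  ⟨fun h => le_succ_of_implementable_Gset (h.mono Set.subset_union_left),
    implementable_GLset_of_le⟩

theorem GLset_implementable_circStar (q n : ℕ) (hq : 2 ≤ q) (hn : 1 ≤ n) :
    Implementable Bcirc Bstar n q (Gset q ∪ Lset q) ↔ q ≤ n + 1 :=
  GLset_implementable_circStar_general q n
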